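/- Let G be a 4-partite graph with parts A, B, C, D. Construct the DAG G' as in the 4-Clique reduction: remove edges between A and B; direct edges from D to A and B; direct edges from C to A, B, and D; add copies A' of A and B' of B; add edges a' → a, b' → b, a' → b and b' → a for all a ∈ A, b ∈ B; add c → a' iff {c,a} ∉ E(G) and c → b' iff {c,b} ∉ E(G). Then for every a ∈ A, b ∈ B, c ∈ C: c is an LCA of a and b in G' if and only if {c,a} ∈ E(G), {c,b} ∈ E(G), and there is no d ∈ D with {c,d}, {d,a}, {d,b} all in E(G). -/
import Mathlib


variable {V : Type*}

/-- Reflexive-transitive reachability along directed edges. -/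
def Reach (E : V → V → Prop) : V → V → Prop := Relation.ReflTransGen E

/-- Set of (reflexive) ancestors of `u`. -/
def Anc (E : V → V → Prop) (u : V) : Set V := {x | Reach E x u}

/-- `w` is a lowest common ancestor of `u` and `v`. -/
def IsLCA (E : V → V → Prop) (u v w : V) : Prop :=
  Reach E w u ∧ Reach E w v ∧
    ∀ y, y ≠ w → Reach E w y → ¬(Reach E y u ∧ Reach E y v)

/-- The set of LCAs of `u` and `v`. -/
def LCAset (E : V → V → Prop) (u v : V) : Set V := {w | IsLCA E u v w}

/-- The directed graph given by `E` is acyclic (reachability is antisymmetric). -/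
def IsDAG (E : V → V → Prop) : Prop :=
  ∀ u v : V, Reach E u v → Reach E v u → u = v

section FourClique

variable {α β γ δ : Type*}

/-- Vertices of the reduction DAG `G'`: top layer `C`, middle layer
`A' ⊕ D ⊕ B'`, bottom layer `A ⊕ B`. -/
abbrev FCVert (α β γ δ : Type*) := γ ⊕ ((α ⊕ (δ ⊕ β)) ⊕ (α ⊕ β))

/-- Edges of the reduction DAG `G'`, given the undirected edges of the
4-partite graph `G` between the relevant parts (`Eca c a` means `{c,a} ∈ E(G)`,
etc.). -/
def FCEdge (Eca : γ → α → Prop) (Ecb : γ → β → Prop) (Ecd : γ → δ → Prop)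
    (Eda : δ → α → Prop) (Edb : δ → β → Prop) :
    FCVert α β γ δ → FCVert α β γ δ → Prop
  -- C to the middle layer
  | .inl c, .inr (.inl (.inl a)) => ¬ Eca c a          -- c → a' iff {c,a} ∉ E
  | .inl c, .inr (.inl (.inr (.inl d))) => Ecd c d     -- c → d  iff {c,d} ∈ E
  | .inl c, .inr (.inl (.inr (.inr b))) => ¬ Ecb c b   -- c → b' iff {c,b} ∉ E
  -- C directly to the bottom layer
  | .inl c, .inr (.inr (.inl a)) => Eca c a            -- c → a iff {c,a} ∈ E
  | .inl c, .inr (.inr (.inr b)) => Ecb c b            -- c → b iff {c,b} ∈ E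
  -- middle layer to the bottom layer
  | .inr (.inl (.inl a)), .inr (.inr (.inl a')) => a = a'  -- a' → a
  | .inr (.inl (.inl _)), .inr (.inr (.inr _)) => True     -- a' → b for all b
  | .inr (.inl (.inr (.inl d))), .inr (.inr (.inl a)) => Eda d a
  | .inr (.inl (.inr (.inl d))), .inr (.inr (.inr b)) => Edb d b
  | .inr (.inl (.inr (.inr _))), .inr (.inr (.inl _)) => True  -- b' → a for all a
  | .inr (.inl (.inr (.inr b))), .inr (.inr (.inr b')) => b = b'  -- b' → b
  | _, _ => False

namespace FCAux

variable {Eca : γ → α → Prop} {Ecb : γ → β → Prop} {Ecd : γ → δ → Prop}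
    {Eda : δ → α → Prop} {Edb : δ → β → Prop}

lemma no_edge_to_inl (u : FCVert α β γ δ) (c : γ) :
    ¬ FCEdge Eca Ecb Ecd Eda Edb u (.inl c) := by
  rcases u with c' | ((a | d | b) | (a | b)) <;> exact id

lemma no_edge_to_mid (u : FCVert α β γ δ) (m : α ⊕ (δ ⊕ β)) :
    FCEdge Eca Ecb Ecd Eda Edb u (.inr (.inl m)) → ∃ c : γ, u = .inl c := by
  rcases u with c' | (m' | x)
  · exact fun _ => ⟨c', rfl⟩
  · rcases m' with a | d | b <;> rcases m with a' | d' | b' <;> exact fun h => h.elim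
  · rcases x with a | b <;> rcases m with a' | d' | b' <;> exact fun h => h.elim

lemma bot_terminal {x : α ⊕ β} {v : FCVert α β γ δ} :
    Reach (FCEdge Eca Ecb Ecd Eda Edb) (.inr (.inr x)) v → v = .inr (.inr x) := by
  intro h
  induction h with
  | refl => rfl
  | tail _ h2 ih =>
    subst ih
    rcases x with a | b <;> exact h2.elim

lemma mid_reach {m : α ⊕ (δ ⊕ β)} {v : FCVert α β γ δ} :
    Reach (FCEdge Eca Ecb Ecd Eda Edb) (.inr (.inl m)) v →
      v = .inr (.inl m) ∨ FCEdge Eca Ecb Ecd Eda Edb (.inr (.inl m)) v := by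
  intro h
  rcases h.cases_head with h | ⟨w, hw, hr⟩
  · exact Or.inl h.symm
  · right
    rcases w with c' | (m' | x)
    · exact (no_edge_to_inl _ _ hw).elim
    · exact (by rcases m with a | d | b <;> rcases m' with a' | d' | b' <;> exact hw.elim :
        False).elim
    · have hv : v = .inr (.inr x) := bot_terminal hr
      rwa [hv]

lemma reach_inl_inl {c c' : γ} :
    Reach (FCEdge Eca Ecb Ecd Eda Edb) (.inl c) (.inl c') → c = c' := by
  intro h
  rcases h.cases_tail with h | ⟨w, _, hw⟩
  · exact (Sum.inl.inj h).symm
  · exact (no_edge_to_inl _ _ hw).elim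

end FCAux

theorem stmt_16 [Fintype α] [Fintype β] [Fintype γ] [Fintype δ]
    (Eca : γ → α → Prop) (Ecb : γ → β → Prop) (Ecd : γ → δ → Prop)
    (Eda : δ → α → Prop) (Edb : δ → β → Prop) :
    ∀ (a : α) (b : β) (c : γ),
      IsLCA (FCEdge Eca Ecb Ecd Eda Edb)
          (.inr (.inr (.inl a))) (.inr (.inr (.inr b))) (.inl c) ↔
        (Eca c a ∧ Ecb c b ∧ ¬ ∃ d : δ, Ecd c d ∧ Eda d a ∧ Edb d b) := by
  intro a b c
  constructor
  · rintro ⟨-, -, hmin⟩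
    refine ⟨?_, ?_, ?_⟩
    · by_contra h
      exact hmin (.inr (.inl (.inl a))) (by simp) (Relation.ReflTransGen.single h)
        ⟨Relation.ReflTransGen.single rfl, Relation.ReflTransGen.single trivial⟩
    · by_contra h
      exact hmin (.inr (.inl (.inr (.inr b)))) (by simp) (Relation.ReflTransGen.single h)
        ⟨Relation.ReflTransGen.single trivial, Relation.ReflTransGen.single rfl⟩
    · rintro ⟨d, hcd, hda, hdb⟩
      exact hmin (.inr (.inl (.inr (.inl d)))) (by simp) (Relation.ReflTransGen.single hcd)
        ⟨Relation.ReflTransGen.single hda, Relation.ReflTransGen.single hdb⟩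
  · rintro ⟨hca, hcb, hnod⟩
    refine ⟨Relation.ReflTransGen.single hca, Relation.ReflTransGen.single hcb, ?_⟩
    rintro y hy hcy ⟨hya, hyb⟩
    rcases y with c' | (m | x)
    · exact hy (by rw [FCAux.reach_inl_inl hcy])
    · have hedge : FCEdge Eca Ecb Ecd Eda Edb (.inl c) (.inr (.inl m)) := by
        rcases hcy.cases_tail with h | ⟨w, hw, hwe⟩
        · exact absurd h (by simp)
        · obtain ⟨c'', rfl⟩ := FCAux.no_edge_to_mid _ _ hwe
          rwa [FCAux.reach_inl_inl hw]
      have hma : FCEdge Eca Ecb Ecd Eda Edb (.inr (.inl m)) (.inr (.inr (.inl a))) := by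
        rcases FCAux.mid_reach hya with h | h
        · exact absurd h (by simp)
        · exact h
      have hmb : FCEdge Eca Ecb Ecd Eda Edb (.inr (.inl m)) (.inr (.inr (.inr b))) := by
        rcases FCAux.mid_reach hyb with h | h
        · exact absurd h (by simp)
        · exact h
      rcases m with a' | d | b'
      · exact hedge (hma ▸ hca)
      · exact hnod ⟨d, hedge, hma, hmb⟩
      · exact hedge (hmb ▸ hcb)
    · have h1 := FCAux.bot_terminal hya
      have h2 := FCAux.bot_terminal hyb
      rw [← h1] at h2
      simp at h2

end FourClique
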